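/- Let K be a flag simplicial complex on [m] and let i, j ∈ [m] with i ≠ j and {i,j} ∉ K. Then the element ⁅μ_i, ⁅μ_i, μ_j⁆⁆ of L_K does not belong to the Lie subalgebra N_K. In particular, since ⁅μ_i, ⁅μ_i, μ_j⁆⁆ lies in the commutator subalgebra L'_K = [L_K, L_K] and N_K ⊆ L'_K, the inclusion N_K ⊆ L'_K is strict whenever K is not a full simplex on [m]. -/

import Mathlib

/-!
Map `L_K` to the `4 × 4` matrices by `μ_i ↦ x = E₀₁ + E₁₂`, `μ_j ↦ y = E₂₃` and all other
generators to `0`; this kills the defining relations because `{i, j} ∉ K`. A GPTW generator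
`c_μ(J ∖ {j₀}, μ_{j₀})` involves at least two letters, so its image vanishes unless
`J = {i, j}`, in which case it is `±⁅x, y⁆ = ±E₁₃`. Matrices with vanishing row `0` form a Lie
subalgebra containing `E₁₃`, hence the image of `N_K`, but `⁅x, ⁅x, y⁆⁆ = E₀₃` is not in it.
-/

/-- `K` is a simplicial complex on the vertex set `Fin m`. -/
def IsSimplicialComplex {m : ℕ} (K : Finset (Finset (Fin m))) : Prop :=
  (∀ I ∈ K, ∀ I' ⊆ I, I' ∈ K) ∧ ∅ ∈ K ∧ ∀ i : Fin m, ({i} : Finset (Fin m)) ∈ K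

/-- `K` is flag: every set of vertices pairwise joined by `2`-element simplices
of `K` is itself a simplex of `K`. -/
def IsFlag {m : ℕ} (K : Finset (Finset (Fin m))) : Prop :=
  ∀ S : Finset (Fin m),
    (∀ i ∈ S, ∀ j ∈ S, i ≠ j → ({i, j} : Finset (Fin m)) ∈ K) → S ∈ K

/-- `a` and `b` lie in the same connected component of the graph of the full
subcomplex `K_J`. -/
def connKJ {m : ℕ} (K : Finset (Finset (Fin m))) (J : Finset (Fin m)) :
    Fin m → Fin m → Prop :=
  Relation.ReflTransGen
    (fun a b => a ∈ J ∧ b ∈ J ∧ a ≠ b ∧ ({a, b} : Finset (Fin m)) ∈ K)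

/-- `Θ_K(J)`: the set of vertices `j ∈ J` that are smallest in their connected
component of the graph of `K_J`, this component not containing `max J`. -/
def Theta {m : ℕ} (K : Finset (Finset (Fin m))) (J : Finset (Fin m)) (j : Fin m) : Prop :=
  ∃ hj : j ∈ J, (∀ i ∈ J, connKJ K J j i → j ≤ i) ∧
    ¬ connKJ K J j (J.max' ⟨j, hj⟩)

/-- The Lie ideal of relations defining the graph Lie algebra `L_K` over `ℤ/2`. -/
noncomputable def LKrels {m : ℕ} (K : Finset (Finset (Fin m))) :
    LieIdeal (ZMod 2) (FreeLieAlgebra (ZMod 2) (Fin m)) :=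
  LieSubmodule.lieSpan (ZMod 2) (FreeLieAlgebra (ZMod 2) (Fin m))
    {z | ∃ i j : Fin m, ({i, j} : Finset (Fin m)) ∈ K ∧
      z = ⁅FreeLieAlgebra.of (ZMod 2) i, FreeLieAlgebra.of (ZMod 2) j⁆}

/-- The graph Lie algebra `L_K` over `ℤ/2`. -/
abbrev LK {m : ℕ} (K : Finset (Finset (Fin m))) :=
  FreeLieAlgebra (ZMod 2) (Fin m) ⧸ LKrels K

/-- The generators `μ₁, …, μ_m` of `L_K`. -/
noncomputable def mu {m : ℕ} (K : Finset (Finset (Fin m))) (i : Fin m) : LK K :=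
  LieSubmodule.Quotient.mk (N := LKrels K) (FreeLieAlgebra.of (ZMod 2) i)

/-- For `q : Fin m → L` and `I = {t₁ < … < t_s} ⊆ [m]`, the nested commutator
`c_q(I, x) = ⁅q t₁, ⁅q t₂, … ⁅q t_s, x⁆…⁆⁆`, with `c_q(∅, x) = x`. -/
def cNest {L : Type*} [LieRing L] {m : ℕ} (q : Fin m → L) (I : Finset (Fin m)) (x : L) : L :=
  (I.sort (· ≤ ·)).foldr (fun t acc => ⁅q t, acc⁆) x

/-- The set of GPTW generators of `L_K`. -/
def GPTWset {m : ℕ} (K : Finset (Finset (Fin m))) : Set (LK K) :=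
  {z | ∃ (J : Finset (Fin m)) (j : Fin m),
    Theta K J j ∧ z = cNest (mu K) (J.erase j) (mu K j)}

/-- `N_K`, the Lie subalgebra of `L_K` generated by the GPTW generators. -/
noncomputable def NK {m : ℕ} (K : Finset (Finset (Fin m))) : LieSubalgebra (ZMod 2) (LK K) :=
  LieSubalgebra.lieSpan (ZMod 2) (LK K) (GPTWset K)

/-- The commutator (derived) ideal `L'_K = [L_K, L_K]`. -/
noncomputable def LKderived {m : ℕ} (K : Finset (Finset (Fin m))) :
    LieIdeal (ZMod 2) (LK K) :=
  ⁅(⊤ : LieIdeal (ZMod 2) (LK K)), (⊤ : LieIdeal (ZMod 2) (LK K))⁆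

attribute [local instance] LieRing.ofAssociativeRing

namespace Matrix

variable {n R : Type*} [Fintype n] [DecidableEq n] [CommRing R]

def rowZeroLieSubalgebra (r : n) : LieSubalgebra R (Matrix n n R) where
  carrier := {A | ∀ k, A r k = 0}
  add_mem' ha hb k := by simp [ha k, hb k]
  zero_mem' _ := rfl
  smul_mem' c A hA k := by simp [hA k]
  lie_mem' {A B} hA hB k := by simp [Ring.lie_def, mul_apply, hA _, hB _]

@[simp]
lemma mem_rowZeroLieSubalgebra {r : n} {A : Matrix n n R} :
    A ∈ rowZeroLieSubalgebra r ↔ ∀ k, A r k = 0 :=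
  Iff.rfl

end Matrix

section FourByFourModel

open Matrix

variable (R : Type*) [CommRing R]

def xMat : Matrix (Fin 4) (Fin 4) R := single 0 1 1 + single 1 2 1

def yMat : Matrix (Fin 4) (Fin 4) R := single 2 3 1

lemma lie_xMat_yMat : ⁅xMat R, yMat R⁆ = single 1 3 1 := by
  simp [xMat, yMat, Ring.lie_def, add_mul, mul_add, single_mul_single_same,
    single_mul_single_of_ne]

lemma lie_xMat_lie_xMat_yMat : ⁅xMat R, ⁅xMat R, yMat R⁆⁆ = single 0 3 1 := by
  rw [lie_xMat_yMat]
  simp [xMat, Ring.lie_def, add_mul, mul_add, single_mul_single_same, single_mul_single_of_ne]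

lemma lie_xMat_yMat_mem_rowZeroLieSubalgebra :
    ⁅xMat R, yMat R⁆ ∈ rowZeroLieSubalgebra (R := R) 0 := by
  simp [lie_xMat_yMat]

lemma lie_xMat_lie_xMat_yMat_notMem_rowZeroLieSubalgebra [Nontrivial R] :
    ⁅xMat R, ⁅xMat R, yMat R⁆⁆ ∉ rowZeroLieSubalgebra (R := R) 0 := by
  rw [lie_xMat_lie_xMat_yMat, mem_rowZeroLieSubalgebra, not_forall]
  exact ⟨3, by simp⟩

end FourByFourModel

section cNest

variable {R L L' : Type*} [CommRing R] [LieRing L] [LieAlgebra R L] [LieRing L']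
  [LieAlgebra R L'] {m : ℕ}

lemma cNest_map (f : L →ₗ⁅R⁆ L') (q : Fin m → L) (I : Finset (Fin m)) (x : L) :
    f (cNest q I x) = cNest (f ∘ q) I (f x) := by
  unfold cNest
  induction I.sort (· ≤ ·) with
  | nil => rfl
  | cons a l ih => simp only [List.foldr_cons, LieHom.map_lie, ih, Function.comp_apply]

lemma cNest_zero (q : Fin m → L) (I : Finset (Fin m)) : cNest q I 0 = 0 := by
  unfold cNest
  induction I.sort (· ≤ ·) with
  | nil => rfl
  | cons a l ih => simp only [List.foldr_cons, ih, lie_zero]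

lemma cNest_eq_zero_of_mem (q : Fin m → L) {I : Finset (Fin m)} (x : L) {t : Fin m}
    (ht : t ∈ I) (hq : q t = 0) : cNest q I x = 0 := by
  unfold cNest
  rw [← Finset.mem_sort (· ≤ ·)] at ht
  generalize I.sort (· ≤ ·) = l at ht ⊢
  induction l with
  | nil => simp at ht
  | cons a l ih =>
    rcases List.mem_cons.mp ht with rfl | ht
    · simp [hq]
    · simp [ih ht]

lemma cNest_singleton (q : Fin m → L) (t : Fin m) (x : L) : cNest q {t} x = ⁅q t, x⁆ := by
  simp [cNest]

lemma cNest_mem_lie_top (q : Fin m → L) {I : Finset (Fin m)} (x : L) (hI : I.Nonempty) :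
    cNest q I x ∈ ⁅(⊤ : LieIdeal R L), (⊤ : LieIdeal R L)⁆ := by
  obtain ⟨t, ht⟩ := hI
  unfold cNest
  rw [← Finset.mem_sort (· ≤ ·)] at ht
  generalize I.sort (· ≤ ·) = l at ht ⊢
  cases l with
  | nil => simp at ht
  | cons a l => exact LieSubmodule.lie_mem_lie (LieSubmodule.mem_top _) (LieSubmodule.mem_top _)

end cNest

lemma Theta.erase_nonempty {m : ℕ} {K : Finset (Finset (Fin m))} {J : Finset (Fin m)}
    {j : Fin m} (hΘ : Theta K J j) : (J.erase j).Nonempty := by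
  obtain ⟨hj, -, hmax⟩ := hΘ
  rw [Finset.nonempty_iff_ne_empty, Ne, Finset.erase_eq_empty_iff]
  rintro (rfl | rfl)
  · exact Finset.notMem_empty _ hj
  · exact hmax (by rw [Finset.max'_singleton]; exact .refl)

section PairSupported

variable {ι R L : Type*} [DecidableEq ι] [CommRing R] [LieRing L] [LieAlgebra R L]
  {ψ : ι → L} {i j : ι}

lemma lie_eq_zero_of_pair_ne (hψ : ∀ k, k ≠ i → k ≠ j → ψ k = 0) {a b : ι}
    (hab : ({a, b} : Finset ι) ≠ {i, j}) : ⁅ψ a, ψ b⁆ = 0 := by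
  by_cases ha : a = i ∨ a = j
  · by_cases hb : b = i ∨ b = j
    · obtain rfl | hne := eq_or_ne a b
      · exact lie_self _
      · exfalso
        rcases ha with rfl | rfl <;> rcases hb with rfl | rfl <;> simp_all [Finset.pair_comm]
    · rw [hψ b (by tauto) (by tauto), lie_zero]
  · rw [hψ a (by tauto) (by tauto), zero_lie]

lemma cNest_erase_mem_of_support_subset_pair (S : LieSubalgebra R L) {m : ℕ} {ψ : Fin m → L}
    {i j : Fin m} (hψ : ∀ k, k ≠ i → k ≠ j → ψ k = 0) (hS : ⁅ψ i, ψ j⁆ ∈ S) {J : Finset (Fin m)}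
    {j₀ : Fin m} (hJ : (J.erase j₀).Nonempty) : cNest ψ (J.erase j₀) (ψ j₀) ∈ S := by
  by_cases hout : ∃ t ∈ J.erase j₀, t ≠ i ∧ t ≠ j
  · obtain ⟨t, ht, hti, htj⟩ := hout
    rw [cNest_eq_zero_of_mem ψ _ ht (hψ t hti htj)]
    exact S.zero_mem
  push Not at hout
  by_cases hj₀i : j₀ = i
  · subst hj₀i
    have hJj : J.erase j₀ = {j} := Finset.eq_singleton_iff_nonempty_unique_mem.mpr
      ⟨hJ, fun t ht => hout t ht (Finset.ne_of_mem_erase ht)⟩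
    rw [hJj, cNest_singleton, ← lie_skew]
    exact S.neg_mem hS
  by_cases hj₀j : j₀ = j
  · subst hj₀j
    have hJi : J.erase j₀ = {i} := Finset.eq_singleton_iff_nonempty_unique_mem.mpr
      ⟨hJ, fun t ht => by_contra fun hti => Finset.ne_of_mem_erase ht (hout t ht hti)⟩
    rw [hJi, cNest_singleton]
    exact hS
  · rw [hψ j₀ hj₀i hj₀j, cNest_zero]
    exact S.zero_mem

end PairSupported

namespace LK

variable {m : ℕ} (K : Finset (Finset (Fin m))) {L : Type*} [LieRing L] [LieAlgebra (ZMod 2) L]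
  (ψ : Fin m → L)

lemma LKrels_le_ker_lift (hψ : ∀ a b, ({a, b} : Finset (Fin m)) ∈ K → ⁅ψ a, ψ b⁆ = 0) :
    LKrels K ≤ (FreeLieAlgebra.lift (ZMod 2) ψ).ker := by
  refine LieSubmodule.lieSpan_le.mpr ?_
  rintro _ ⟨a, b, hab, rfl⟩
  simp [hψ a b hab]

noncomputable def lift (hψ : ∀ a b, ({a, b} : Finset (Fin m)) ∈ K → ⁅ψ a, ψ b⁆ = 0) :
    LK K →ₗ⁅ZMod 2⁆ L :=
  { toLinearMap := (LKrels K).toSubmodule.liftQ (FreeLieAlgebra.lift (ZMod 2) ψ).toLinearMap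
      fun _ hz => LieHom.mem_ker.mp (LKrels_le_ker_lift K ψ hψ hz)
    map_lie' := by
      rintro ⟨a⟩ ⟨b⟩
      exact (FreeLieAlgebra.lift (ZMod 2) ψ).map_lie a b }

@[simp]
lemma lift_mu (hψ : ∀ a b, ({a, b} : Finset (Fin m)) ∈ K → ⁅ψ a, ψ b⁆ = 0) (k : Fin m) :
    lift K ψ hψ (mu K k) = ψ k :=
  FreeLieAlgebra.lift_of_apply ψ k

end LK

section NK

variable {m : ℕ} (K : Finset (Finset (Fin m)))

lemma NK_le_LKderived : NK K ≤ (LKderived K).toLieSubalgebra := by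
  refine LieSubalgebra.lieSpan_le.mpr ?_
  rintro _ ⟨J, j, hΘ, rfl⟩
  exact cNest_mem_lie_top _ _ hΘ.erase_nonempty

lemma bracket_notMem_NK_of_detector {L : Type*} [LieRing L] [LieAlgebra (ZMod 2) L]
    (S : LieSubalgebra (ZMod 2) L) {ψ : Fin m → L} {i j : Fin m}
    (hψ : ∀ k, k ≠ i → k ≠ j → ψ k = 0) (hnotK : ({i, j} : Finset (Fin m)) ∉ K)
    (hS : ⁅ψ i, ψ j⁆ ∈ S) (hnotS : ⁅ψ i, ⁅ψ i, ψ j⁆⁆ ∉ S) :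
    ⁅mu K i, ⁅mu K i, mu K j⁆⁆ ∉ NK K := by
  set f := LK.lift K ψ fun _ _ hab => lie_eq_zero_of_pair_ne hψ (ne_of_mem_of_not_mem hab hnotK)
  have hNK : NK K ≤ S.comap f := by
    refine LieSubalgebra.lieSpan_le.mpr ?_
    rintro _ ⟨J, j₀, hΘ, rfl⟩
    change f (cNest (mu K) (J.erase j₀) (mu K j₀)) ∈ S
    rw [cNest_map]
    simpa only [Function.comp_def, f, LK.lift_mu] using
      cNest_erase_mem_of_support_subset_pair S hψ hS hΘ.erase_nonempty
  intro hmem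
  have hmem' : f ⁅mu K i, ⁅mu K i, mu K j⁆⁆ ∈ S := hNK hmem
  simp only [LieHom.map_lie, f, LK.lift_mu] at hmem'
  exact hnotS hmem'

end NK

theorem bracket_not_mem_NK_general {m : ℕ} (K : Finset (Finset (Fin m)))
    (i j : Fin m) (hij : i ≠ j) (hnotK : ({i, j} : Finset (Fin m)) ∉ K) :
    ⁅mu K i, ⁅mu K i, mu K j⁆⁆ ∉ NK K ∧
    ⁅mu K i, ⁅mu K i, mu K j⁆⁆ ∈ LKderived K ∧
    ∀ w ∈ NK K, w ∈ LKderived K := by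
  refine ⟨fun hmem => ?_, LieSubmodule.lie_mem_lie (LieSubmodule.mem_top _)
    (LieSubmodule.mem_top _), fun w hw => NK_le_LKderived K hw⟩
  let ψ : Fin m → Matrix (Fin 4) (Fin 4) (ZMod 2) := fun k =>
    if k = i then xMat _ else if k = j then yMat _ else 0
  have hψi : ψ i = xMat _ := if_pos rfl
  have hψj : ψ j = yMat _ := by simp [ψ, hij.symm]
  refine bracket_notMem_NK_of_detector K (Matrix.rowZeroLieSubalgebra 0) (ψ := ψ)
    (fun k hki hkj => by simp [ψ, hki, hkj]) hnotK ?_ ?_ hmem <;> rw [hψi, hψj]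
  · exact lie_xMat_yMat_mem_rowZeroLieSubalgebra _
  · exact lie_xMat_lie_xMat_yMat_notMem_rowZeroLieSubalgebra _

/-- Let `K` be a flag simplicial complex on `[m]` and
`i ≠ j` with `{i,j} ∉ K`.  Then `⁅μᵢ, ⁅μᵢ, μⱼ⁆⁆ ∉ N_K`, while
`⁅μᵢ, ⁅μᵢ, μⱼ⁆⁆ ∈ L'_K = [L_K, L_K]` and `N_K ⊆ L'_K`; in particular the
inclusion `N_K ⊆ L'_K` is strict whenever `K` is not a full simplex. -/
theorem bracket_not_mem_NK {m : ℕ} (K : Finset (Finset (Fin m)))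
    (hK : IsSimplicialComplex K) (hflag : IsFlag K)
    (i j : Fin m) (hij : i ≠ j) (hnotK : ({i, j} : Finset (Fin m)) ∉ K) :
    ⁅mu K i, ⁅mu K i, mu K j⁆⁆ ∉ NK K ∧
    ⁅mu K i, ⁅mu K i, mu K j⁆⁆ ∈ LKderived K ∧
    ∀ w ∈ NK K, w ∈ LKderived K :=
  bracket_not_mem_NK_general K i j hij hnotK
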